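/- Every reachable state of a set automaton contains a root goal, i.e., a match goal whose match announcement has position ε. -/

import Mathlib

/-- A position is a finite list of positive natural numbers. -/
abbrev Pos : Type := List ℕ+

/-- `below p q` (written `p ≤ q` in the paper) holds iff `q` is a prefix of `p`. -/
def below (p q : Pos) : Prop := ∃ q'' : Pos, p = q ++ q''

/-- Terms over a signature `F`, with a single variable `ω` (patterns are linear). -/
inductive Tm (F : Type) : Type
  | var : Tm F
  | app : F → List (Tm F) → Tm F

variable {F : Type}

/-- Head symbol of a term (none for the variable). -/
def hd : Tm F → Option F
  | .var => none
  | .app f _ => some f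

/-- The subterm of `t` at position `p`, if `p` is in the domain of `t`. -/
def subtermAt : Tm F → Pos → Option (Tm F)
  | t, [] => some t
  | .var, _ :: _ => none
  | .app _ ts, i :: p => (ts[(i : ℕ) - 1]?).bind (fun u => subtermAt u p)

/-- The domain (set of positions) of a term. -/
def Dom (t : Tm F) : Set Pos := {p | (subtermAt t p).isSome}

/-- `t` is a closed term: it contains no variable. -/
def Closed (t : Tm F) : Prop := ∀ p u, subtermAt t p = some u → u ≠ Tm.var

/-- Terms that respect the arity function of the signature. -/
inductive WF (ar : F → ℕ) : Tm F → Prop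
  | var : WF ar Tm.var
  | app : ∀ f ts, ts.length = ar f → (∀ u ∈ ts, WF ar u) → WF ar (Tm.app f ts)

/-- Pattern `ℓ` matches term `t` at position `p`: for every non-variable
position `p'` of `ℓ`, the head symbols of `t[p.p']` and `ℓ[p']` agree. -/
def Matches (ℓ t : Tm F) (p : Pos) : Prop :=
  ∀ p' u, subtermAt ℓ p' = some u → u ≠ Tm.var →
    ∃ v, subtermAt t (p ++ p') = some v ∧ hd v = hd u

/-- A match obligation: a set of (subpattern, position) pairs. -/
abbrev Obl (F : Type) := Set (Tm F × Pos)
/-- A match goal: a match obligation together with a match announcement. -/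
abbrev Goal (F : Type) := Obl F × (Tm F × Pos)
/-- A state of the set automaton: a set of match goals. -/
abbrev St (F : Type) := Set (Goal F)

/-- The positions of a match obligation. -/
def posOf (mo : Obl F) : Set Pos := {p | ∃ u, (u, p) ∈ mo}

/-- All match obligation positions of a state. -/
def posMO (s : St F) : Set Pos := {p | ∃ g ∈ s, p ∈ posOf g.1}

/-- Reduction of a match obligation after observing a symbol of arity `n`
at position `p`: pairs at other positions are kept, and the pair at `p` is
replaced by obligations for its non-variable arguments. -/
def reduce (mo : Obl F) (n : ℕ) (p : Pos) : Obl F :=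
  {x | x ∈ mo ∧ x.2 ≠ p} ∪
  {x | ∃ (ℓ u : Tm F) (i : ℕ+), (ℓ, p) ∈ mo ∧ (i : ℕ) ≤ n ∧
        subtermAt ℓ [i] = some u ∧ u ≠ Tm.var ∧ x = (u, p ++ [i])}

/-- The `f`-derivative of state `s` labelled with position `lab`:
unchanged goals, reduced goals and fresh goals. -/
def derivS (pats : Set (Tm F)) (ar : F → ℕ) (s : St F) (lab : Pos) (f : F) : St F :=
  {g | g ∈ s ∧ lab ∉ posOf g.1} ∪
  {g | ∃ mo ma, (mo, ma) ∈ s ∧ (∃ ℓ, (ℓ, lab) ∈ mo ∧ hd ℓ = some f) ∧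
        reduce mo (ar f) lab ≠ ∅ ∧ g = (reduce mo (ar f) lab, ma)} ∪
  {g | ∃ (ℓ : Tm F) (i : ℕ+), ℓ ∈ pats ∧ (i : ℕ) ≤ ar f ∧
        g = ({(ℓ, lab ++ [i])}, (ℓ, lab ++ [i]))}

/-- The direct dependency relation: the obligation position sets intersect. -/
def dirDep (g₁ g₂ : Goal F) : Prop := (posOf g₁.1 ∩ posOf g₂.1).Nonempty

/-- `K` is an equivalence class of `X` under the transitive closure of the
direct dependency relation restricted to `X`. -/
def IsClass (X K : St F) : Prop :=
  ∃ g ∈ X, K = {g' | g' ∈ X ∧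
    Relation.ReflTransGen (fun a b => a ∈ X ∧ b ∈ X ∧ dirDep a b) g g'}

/-- The match announcement positions of a set of goals. -/
def posMA (K : St F) : Set Pos := {p | ∃ mo ℓ, (mo, (ℓ, p)) ∈ K}

/-- `g` is the greatest common prefix (join) of the set of positions `P`. -/
def IsGcp (P : Set Pos) (g : Pos) : Prop :=
  (∀ p ∈ P, below p g) ∧ ∀ r : Pos, (∀ p ∈ P, below p r) → below g r

/-- Lift a match goal by stripping the common prefix `g` from all positions. -/
def liftGoal (g : Pos) (x : Goal F) : Goal F :=
  ((fun y : Tm F × Pos => (y.1, y.2.drop g.length)) '' x.1,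
   (x.2.1, x.2.2.drop g.length))

/-- Lift a set of match goals. -/
def liftSt (g : Pos) (K : St F) : St F := liftGoal g '' K

/-- The transition function of the set automaton: `(s', p') ∈ delta pats ar L s f`
iff `s'` is the lifting of a dependency class `K` of the derivative and `p'` is
the greatest common prefix of the announcement positions of `K`. -/
def delta (pats : Set (Tm F)) (ar : F → ℕ) (L : St F → Pos) (s : St F) (f : F) :
    Set (St F × Pos) :=
  {x | ∃ K, IsClass (derivS pats ar s (L s) f) K ∧ IsGcp (posMA K) x.2 ∧
        x.1 = liftSt x.2 K}

/-- The initial state: all fresh root goals. -/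
def initSt (pats : Set (Tm F)) : St F :=
  {g | ∃ ℓ ∈ pats, g = ({(ℓ, ([] : Pos))}, (ℓ, ([] : Pos)))}

/-- Reachable states of the set automaton. -/
inductive Reachable (pats : Set (Tm F)) (ar : F → ℕ) (L : St F → Pos) : St F → Prop
  | init : Reachable pats ar L (initSt pats)
  | step : ∀ s f s' p, Reachable pats ar L s →
      (s', p) ∈ delta pats ar L s f → Reachable pats ar L s'

/-- The labelling function `L` picks, for every reachable state, an obligation
position of one of its root goals. -/
def RootLabel (pats : Set (Tm F)) (ar : F → ℕ) (L : St F → Pos) : Prop :=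
  ∀ s, Reachable pats ar L s →
    ∃ mo ℓ, (mo, (ℓ, ([] : Pos))) ∈ s ∧ L s ∈ posOf mo

/-- The nodes of the evaluation tree `ET_M(t)`. -/
inductive Node (pats : Set (Tm F)) (ar : F → ℕ) (L : St F → Pos) (t : Tm F) :
    St F → Pos → Prop
  | root : Node pats ar L t (initSt pats) []
  | step : ∀ s p f s' p', Node pats ar L t s p →
      (∃ v, subtermAt t (p ++ L s) = some v ∧ hd v = some f) →
      (s', p') ∈ delta pats ar L s f →
      Node pats ar L t s' (p ++ p')

/-- The edges of the evaluation tree `ET_M(t)`. -/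
def EdgeRel (pats : Set (Tm F)) (ar : F → ℕ) (L : St F → Pos) (t : Tm F)
    (s : St F) (p : Pos) (s' : St F) (q : Pos) : Prop :=
  Node pats ar L t s p ∧ ∃ f p',
    (∃ v, subtermAt t (p ++ L s) = some v ∧ hd v = some f) ∧
    (s', p') ∈ delta pats ar L s f ∧ q = p ++ p'

/-- The work set `W(s,p)`: the positions of `t` below the position pointer that
still have to be inspected. -/
def Work (t : Tm F) (s : St F) (p : Pos) : Set Pos :=
  {x | ∃ q, x = p ++ q ∧ x ∈ Dom t ∧ ∃ r ∈ posMO s, below q r}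

/-- The output function: match announcements whose obligation is completed by
observing `f` at the label position. -/
def outS (ar : F → ℕ) (L : St F → Pos) (s : St F) (f : F) : Set (Tm F × Pos) :=
  {ma | ({(Tm.app f (List.replicate (ar f) Tm.var), L s)}, ma) ∈ s}


/-!
Every match goal is *anchored*: its announcement position is a prefix of all of its
obligation positions. This survives derivation and lifting. Two dependent goals of an
anchored state share an obligation position, so their announcement positions are
prefixes of a common list and hence comparable. Following dependency paths from a goal
whose announcement position is shortest in its class, the announcement positions can
therefore never drop below it: it is a prefix of every announcement position of the
class, so it is the class's greatest common prefix, and lifting strips it to `ε`.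
-/

lemma below_iff_prefix {p q : Pos} : below p q ↔ q <+: p :=
  ⟨fun ⟨a, h⟩ => ⟨a, h.symm⟩, fun ⟨a, h⟩ => ⟨a, h.symm⟩⟩

lemma below_antisymm {p q : Pos} (hpq : below p q) (hqp : below q p) : p = q := by
  rw [below_iff_prefix] at hpq hqp
  exact hqp.eq_of_length (le_antisymm hqp.length_le hpq.length_le)

lemma IsGcp.eq_of_mem {P : Set Pos} {g m : Pos} (hg : IsGcp P g) (hm : m ∈ P)
    (hmin : ∀ p ∈ P, below p m) : g = m :=
  below_antisymm (hg.2 m hmin) (hg.1 m hm)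

lemma Relation.ReflTransGen.prefix_of_length_le {α β : Type*} {r : α → α → Prop}
    {f : α → List β} {a b : α} (hcomp : ∀ b c, r b c → f b <+: f c ∨ f c <+: f b)
    (hlen : ∀ c, Relation.ReflTransGen r a c → (f a).length ≤ (f c).length)
    (hab : Relation.ReflTransGen r a b) : f a <+: f b := by
  induction hab with
  | refl => exact List.prefix_refl _
  | @tail b c hab hbc ih =>
    rcases hcomp b c hbc with hbc' | hcb
    · exact ih.trans hbc'
    · rcases List.prefix_or_prefix_of_prefix ih hcb with hac | hca
      · exact hac
      · exact (hca.eq_of_length (le_antisymm hca.length_le (hlen c (hab.tail hbc)))) ▸ hca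

lemma IsClass.subset {X K : St F} (hK : IsClass X K) : K ⊆ X := by
  obtain ⟨g, -, rfl⟩ := hK
  exact fun _ hg => hg.1

def Anchored (s : St F) : Prop :=
  ∀ g ∈ s, ∀ p ∈ posOf g.1, below p g.2.2

namespace Anchored

lemma mono {s t : St F} (ht : Anchored t) (hst : s ⊆ t) : Anchored s :=
  fun g hg => ht g (hst hg)

lemma initSt (pats : Set (Tm F)) : Anchored (initSt pats) := by
  rintro g ⟨ℓ, -, rfl⟩ p ⟨u, hu⟩
  simp only [Set.mem_singleton_iff, Prod.mk.injEq] at hu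
  exact ⟨[], by simp [hu.2]⟩

lemma derivS (pats : Set (Tm F)) (ar : F → ℕ) {s : St F} (lab : Pos) (f : F)
    (hs : Anchored s) : Anchored (derivS pats ar s lab f) := by
  rintro g ((⟨hg, -⟩ | ⟨mo, ma, hmem, -, -, rfl⟩) | ⟨ℓ, i, -, -, rfl⟩) p ⟨u, hu⟩
  · exact hs g hg p ⟨u, hu⟩
  · rcases hu with ⟨hu, -⟩ | ⟨ℓ, v, i, hℓ, -, -, -, heq⟩
    · exact hs (mo, ma) hmem p ⟨u, hu⟩
    · obtain ⟨-, rfl⟩ := Prod.mk.inj heq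
      obtain ⟨a, ha⟩ := hs (mo, ma) hmem lab ⟨ℓ, hℓ⟩
      exact ⟨a ++ [i], by simp [ha]⟩
  · simp only [Set.mem_singleton_iff, Prod.mk.injEq] at hu
    exact ⟨[], by simp [hu.2]⟩

lemma liftSt {K : St F} {p : Pos} (hK : Anchored K) (hp : ∀ q ∈ posMA K, below q p) :
    Anchored (liftSt p K) := by
  rintro g ⟨⟨mo, ma⟩, hmem, rfl⟩ r ⟨u, ⟨v, rv⟩, hv, heq⟩
  obtain ⟨-, rfl⟩ := Prod.mk.inj heq
  obtain ⟨a, rfl⟩ := hK (mo, ma) hmem rv ⟨v, hv⟩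
  obtain ⟨b, hb⟩ := hp ma.2 ⟨mo, ma.1, hmem⟩
  refine ⟨a, ?_⟩
  simp [liftGoal, hb, List.drop_left']

lemma dirDep_prefix_or_prefix {s : St F} (hs : Anchored s) {g₁ g₂ : Goal F}
    (h₁ : g₁ ∈ s) (h₂ : g₂ ∈ s) (hdep : dirDep g₁ g₂) :
    g₁.2.2 <+: g₂.2.2 ∨ g₂.2.2 <+: g₁.2.2 := by
  obtain ⟨q, hq₁, hq₂⟩ := hdep
  exact List.prefix_or_prefix_of_prefix (below_iff_prefix.mp (hs g₁ h₁ q hq₁))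
    (below_iff_prefix.mp (hs g₂ h₂ q hq₂))

lemma exists_min_of_isClass {X K : St F} (hX : Anchored X) (hK : IsClass X K) :
    ∃ g₀ ∈ K, ∀ g ∈ K, below g.2.2 g₀.2.2 := by
  obtain ⟨g, hgX, rfl⟩ := hK
  set R : Goal F → Goal F → Prop := fun a b => a ∈ X ∧ b ∈ X ∧ dirDep a b
  set C : St F := {g' | g' ∈ X ∧ Relation.ReflTransGen R g g'}
  have : Std.Symm R := ⟨fun _ _ ⟨ha, hb, q, hqa, hqb⟩ => ⟨hb, ha, q, hqb, hqa⟩⟩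
  have hmemX : ∀ {a b}, a ∈ X → Relation.ReflTransGen R a b → b ∈ X := by
    intro a b ha hab
    induction hab with
    | refl => exact ha
    | tail _ hbc => exact hbc.2.1
  have hne : C.Nonempty := ⟨g, hgX, .refl⟩
  set len : Goal F → ℕ := fun g' => g'.2.2.length
  set g₀ := Function.argminOn len C hne
  obtain ⟨hg₀X, hgg₀⟩ : g₀ ∈ C := Function.argminOn_mem len C hne
  have hg₀_min : ∀ c, Relation.ReflTransGen R g₀ c → len g₀ ≤ len c := fun c hg₀c =>
    Function.argminOn_le len C (⟨hmemX hg₀X hg₀c, hgg₀.trans hg₀c⟩ : c ∈ C)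
  refine ⟨g₀, ⟨hg₀X, hgg₀⟩, fun g' ⟨_, hgg'⟩ => below_iff_prefix.mpr ?_⟩
  exact Relation.ReflTransGen.prefix_of_length_le (r := R) (f := fun g' : Goal F => g'.2.2)
    (fun b c hbc => hX.dirDep_prefix_or_prefix hbc.1 hbc.2.1 hbc.2.2) hg₀_min
    ((Relation.ReflTransGen.stdSymm.symm _ _ hgg₀).trans hgg')

end Anchored

lemma Anchored.of_mem_delta {pats : Set (Tm F)} {ar : F → ℕ} {L : St F → Pos}
    {s s' : St F} {f : F} {p : Pos} (hs : Anchored s) (h : (s', p) ∈ delta pats ar L s f) :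
    Anchored s' := by
  obtain ⟨K, hK, hgcp, hs'⟩ := h
  rw [show s' = _root_.liftSt p K from hs']
  exact ((hs.derivS pats ar (L s) f).mono hK.subset).liftSt hgcp.1

lemma Reachable.anchored {pats : Set (Tm F)} {ar : F → ℕ} {L : St F → Pos} {s : St F}
    (hs : Reachable pats ar L s) : Anchored s := by
  induction hs with
  | init => exact Anchored.initSt pats
  | step _ _ _ _ _ hδ ih => exact ih.of_mem_delta hδ

lemma Anchored.exists_rootGoal_of_mem_delta {pats : Set (Tm F)} {ar : F → ℕ}
    {L : St F → Pos} {s s' : St F} {f : F} {p : Pos} (hs : Anchored s)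
    (h : (s', p) ∈ delta pats ar L s f) : ∃ (mo : Obl F) (ℓ : Tm F), (mo, (ℓ, [])) ∈ s' := by
  obtain ⟨K, hK, hgcp, hs'⟩ := h
  rw [show s' = _root_.liftSt p K from hs']
  obtain ⟨g₀, hg₀, hmin⟩ := (hs.derivS pats ar (L s) f).exists_min_of_isClass hK
  have hp : p = g₀.2.2 :=
    hgcp.eq_of_mem ⟨g₀.1, g₀.2.1, hg₀⟩ fun q ⟨mo, ℓ, hq⟩ => hmin (mo, (ℓ, q)) hq
  refine ⟨(liftGoal p g₀).1, g₀.2.1, ?_⟩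
  have hroot : liftGoal p g₀ = ((liftGoal p g₀).1, (g₀.2.1, [])) := by
    simp [liftGoal, hp]
  exact hroot ▸ ⟨g₀, hg₀, rfl⟩

theorem reachable_has_rootGoal_general {F : Type} (pats : Set (Tm F)) (ar : F → ℕ)
    (L : St F → Pos) (hpats : pats.Nonempty) :
    ∀ s, Reachable pats ar L s →
      ∃ (mo : Obl F) (ℓ : Tm F), (mo, (ℓ, ([] : Pos))) ∈ s := by
  rintro s (_ | ⟨s₀, f, _, p, hs₀, hδ⟩)
  · obtain ⟨ℓ, hℓ⟩ := hpats
    exact ⟨{(ℓ, [])}, ℓ, ℓ, hℓ, rfl⟩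
  · exact hs₀.anchored.exists_rootGoal_of_mem_delta hδ

/-- Every reachable state of the set automaton contains a root goal,
i.e. a match goal whose match announcement has position ε. -/
theorem reachable_has_rootGoal {F : Type} (pats : Set (Tm F)) (ar : F → ℕ)
    (L : St F → Pos) (hpats : pats.Nonempty)
    (hpv : ∀ ℓ ∈ pats, ℓ ≠ Tm.var)
    (hL : ∀ s, Reachable pats ar L s → ∃ g ∈ s, L s ∈ posOf g.1) :
    ∀ s, Reachable pats ar L s →
      ∃ (mo : Obl F) (ℓ : Tm F), (mo, (ℓ, ([] : Pos))) ∈ s :=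
  reachable_has_rootGoal_general pats ar L hpats
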